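/- (Theorem 3.2(ii): L¹ bound of the basic function in the third variable, case ρ ≥ 1) Let θ ∈ ℝ with sin θ ≠ 0 and ρ ≥ 1. Let ψ ∈ L¹(ℝ), let the functions y ↦ (1+|y|^{ρ−1})φ(y) and y ↦ (1+|y|^{ρ−1})χ(y) belong to L¹(ℝ), and let 0 < C_φ = ∫_ℝ |φ̂(ω)|²/|ω| dω < ∞. Then for all u, v ∈ ℝ with u ≠ v, ∫_ℝ |D^α(u,v,w)| dw ≤ C_φ^{−1} · 2^{ρ−1} · |u−v|^{−ρ} · [ ‖φ(x)x^{ρ−1}‖₁ · ‖χ‖₁ + ‖χ(y)y^{ρ−1}‖₁ · ‖φ‖₁ ] · ‖ψ‖₁. -/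

import Mathlib

open MeasureTheory Complex

/-- The fractional wavelet family `φ^α_{a,b}(t) = e^{(-i/2)(t²-b²)cot θ} |a|^{-ρ} φ((t-b)/a)`. -/
noncomputable def fracWav (θ ρ : ℝ) (φ : ℝ → ℂ) (a b t : ℝ) : ℂ :=
  Complex.exp ((-(Complex.I / 2)) * ((t : ℂ) ^ 2 - (b : ℂ) ^ 2) *
      ((Real.cos θ / Real.sin θ : ℝ) : ℂ)) *
    ((|a| ^ (-ρ) : ℝ) : ℂ) * φ ((t - b) / a)

/-- The general novel fractional wavelet transform (GNFrWT). -/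
noncomputable def GNFrWT (θ ρ : ℝ) (φ h : ℝ → ℂ) (a b : ℝ) : ℂ :=
  ∫ t : ℝ, h t * (starRingEnd ℂ) (fracWav θ ρ φ a b t)

/-- The admissibility constant `C_φ = ∫ |φ̂(ω)|²/|ω| dω`. -/
noncomputable def admConst (φ : ℝ → ℂ) : ℝ :=
  ∫ ω : ℝ, ‖FourierTransform.fourier φ ω‖ ^ 2 / |ω|

/-- The basic function `D^α(u,v,w)` associated with the GNFrWT. -/
noncomputable def basicD (θ ρ : ℝ) (ψ χ φ : ℝ → ℂ) (u v w : ℝ) : ℂ :=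
  ((admConst φ : ℝ) : ℂ)⁻¹ *
    ∫ a in Set.Ioi (0 : ℝ), ∫ b : ℝ,
      (starRingEnd ℂ) (fracWav θ ρ ψ a b w) * (starRingEnd ℂ) (fracWav θ ρ χ a b v) *
        fracWav θ ρ φ a b u * ((|a| ^ (2 * ρ - 3) : ℝ) : ℂ)

/-- The convolution `#^α` associated with the GNFrWT. -/
noncomputable def convAlpha (θ ρ : ℝ) (ψ χ φ h g : ℝ → ℂ) (u : ℝ) : ℂ :=
  ∫ w : ℝ, ∫ v : ℝ, basicD θ ρ ψ χ φ u v w * h w * g v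

/-!
Pulling the norm inside, `C_φ |D^α(u,v,w)|` is at most
`∫_{a>0} ∫ a^{-ρ-3} |ψ((w-b)/a)| |χ((v-b)/a)| |φ((u-b)/a)| db da`.
Integrating in `w` first produces `a ‖ψ‖₁`, and the substitution `b = u - a y` another factor `a`,
leaving `∫_{a>0} a^{-ρ-1} ∫ |φ(y)| |χ(y + (v-u)/a)| dy da`. For fixed `y` the substitution
`z = y + (v-u)/a` bounds the `a`-integral by `|v-u|^{-ρ} ∫ |z-y|^{ρ-1} |χ(z)| dz`, and
`|z-y|^{ρ-1} ≤ 2^{ρ-1} (|y|^{ρ-1} + |z|^{ρ-1})` for `ρ ≥ 1` splits the result into the two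
products of moments.
-/

open ENNReal Set

lemma lintegral_comp_div (g : ℝ → ℝ≥0∞) {a : ℝ} (ha : a ≠ 0) :
    ∫⁻ x, g (x / a) = ENNReal.ofReal |a| * ∫⁻ x, g x := by
  have himg : (fun x : ℝ => a * x) '' univ = univ := by
    simpa using (mulLeft_bijective₀ a ha).surjective.range_eq
  have := lintegral_image_eq_lintegral_abs_deriv_mul (f := fun x => a * x) MeasurableSet.univ
    (fun x _ => ((hasDerivAt_id x).const_mul a).hasDerivWithinAt.congr_deriv (mul_one a))
    (mul_right_injective₀ ha).injOn (fun x => g (x / a))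
  rw [himg, Measure.restrict_univ] at this
  rw [this, ← lintegral_const_mul' _ _ ofReal_ne_top]
  simp [mul_div_cancel_left₀ _ ha]

lemma lintegral_comp_sub_div (g : ℝ → ℝ≥0∞) {a : ℝ} (ha : a ≠ 0) (r : ℝ) :
    ∫⁻ x, g ((x - r) / a) = ENNReal.ofReal |a| * ∫⁻ x, g x := by
  rw [lintegral_sub_right_eq_self (fun x => g (x / a)) r, lintegral_comp_div g ha]

lemma lintegral_comp_sub_left_div (g : ℝ → ℝ≥0∞) {a : ℝ} (ha : a ≠ 0) (r : ℝ) :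
    ∫⁻ x, g ((r - x) / a) = ENNReal.ofReal |a| * ∫⁻ x, g x := by
  rw [lintegral_sub_left_eq_self (fun x => g (x / a)) r, lintegral_comp_div g ha]

lemma ae_eq_comp_sub_left_div {α : Type*} {f g : ℝ → α} (h : f =ᵐ[volume] g) {a : ℝ}
    (ha : a ≠ 0) (r : ℝ) :
    (fun x => f ((r - x) / a)) =ᵐ[volume] fun x => g ((r - x) / a) := by
  have hqmp : Measure.QuasiMeasurePreserving (fun x : ℝ => (r - x) / a) := by
    have := (Measure.quasiMeasurePreserving_smul volume (inv_ne_zero ha)).comp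
      (Measure.measurePreserving_sub_left volume r).quasiMeasurePreserving
    simpa only [Function.comp_def, smul_eq_mul, div_eq_inv_mul] using this
  exact hqmp.ae_eq_comp h

lemma rpow_abs_sub_le {p : ℝ} (hp : 0 ≤ p) (y z : ℝ) :
    |z - y| ^ p ≤ 2 ^ p * (|y| ^ p + |z| ^ p) := by
  have key : ∀ s t : ℝ, |s| ≤ |t| → |t - s| ^ p ≤ 2 ^ p * |t| ^ p := fun s t hst => by
    rw [← Real.mul_rpow zero_le_two (abs_nonneg t)]
    exact Real.rpow_le_rpow (abs_nonneg _) (by linarith [abs_sub s t, abs_sub_comm t s]) hp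
  have h2 : 0 ≤ (2 : ℝ) ^ p := by positivity
  have hy : 0 ≤ |y| ^ p := by positivity
  have hz : 0 ≤ |z| ^ p := by positivity
  rcases le_total |y| |z| with h | h
  · nlinarith [key y z h]
  · rw [abs_sub_comm]
    nlinarith [key z y h]

lemma abs_div_sq_mul_rpow_eq (ρ : ℝ) {a c : ℝ} (ha : 0 < a) (hc : c ≠ 0) :
    |c| / a ^ 2 * (|c| ^ (-ρ) * (|c| / a) ^ (ρ - 1)) = a ^ (-ρ - 1) := by
  have hc' : 0 < |c| := abs_pos.mpr hc
  have hc_pow : |c| ^ (-ρ) * |c| ^ (ρ - 1) = |c|⁻¹ := by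
    rw [← Real.rpow_add hc', show -ρ + (ρ - 1) = -1 by ring, Real.rpow_neg_one]
  have ha_pow : a ^ (-ρ - 1) = (a ^ (ρ - 1) * a ^ 2)⁻¹ := by
    rw [← Real.rpow_natCast, ← Real.rpow_add ha, ← Real.rpow_neg ha.le]
    ring_nf
  rw [Real.div_rpow hc'.le ha.le, ← mul_div_assoc, hc_pow, ha_pow]
  field_simp

lemma setLIntegral_Ioi_rpow_mul_comp_add_div_le (ρ : ℝ) {c : ℝ} (hc : c ≠ 0) (y : ℝ)
    (g : ℝ → ℝ≥0∞) :
    ∫⁻ a in Ioi 0, ENNReal.ofReal (a ^ (-ρ - 1)) * g (y + c / a) ≤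
      ENNReal.ofReal (|c| ^ (-ρ)) * ∫⁻ z, ENNReal.ofReal (|z - y| ^ (ρ - 1)) * g z := by
  have hderiv : ∀ a ∈ Ioi (0 : ℝ), HasDerivWithinAt (fun a => y + c / a) (-c / a ^ 2) (Ioi 0) a :=
    fun a ha => by
      simpa [div_eq_mul_inv, neg_div] using
        (((hasDerivAt_inv (ne_of_gt ha)).const_mul c).const_add y).hasDerivWithinAt
  have hinj : InjOn (fun a => y + c / a) (Ioi 0) := fun a₁ h₁ a₂ h₂ h => by
    have : c / a₁ = c / a₂ := add_left_cancel h
    rw [div_eq_div_iff (ne_of_gt h₁) (ne_of_gt h₂)] at this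
    exact mul_left_cancel₀ hc (by linarith)
  have hcv := lintegral_image_eq_lintegral_abs_deriv_mul measurableSet_Ioi hderiv hinj
    fun z => ENNReal.ofReal (|c| ^ (-ρ) * |z - y| ^ (ρ - 1)) * g z
  calc ∫⁻ a in Ioi 0, ENNReal.ofReal (a ^ (-ρ - 1)) * g (y + c / a)
      = ∫⁻ z in (fun a => y + c / a) '' Ioi 0,
          ENNReal.ofReal (|c| ^ (-ρ) * |z - y| ^ (ρ - 1)) * g z := by
        rw [hcv]
        refine setLIntegral_congr_fun measurableSet_Ioi fun a (ha : 0 < a) => ?_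
        rw [← mul_assoc, ← ENNReal.ofReal_mul (abs_nonneg _), add_sub_cancel_left, abs_div,
          abs_div, abs_neg, abs_of_pos ha, abs_of_pos (by positivity : (0 : ℝ) < a ^ 2),
          abs_div_sq_mul_rpow_eq ρ ha hc]
    _ ≤ ∫⁻ z, ENNReal.ofReal (|c| ^ (-ρ) * |z - y| ^ (ρ - 1)) * g z := setLIntegral_le_lintegral _ _
    _ = _ := by
        simp_rw [ENNReal.ofReal_mul (by positivity : 0 ≤ |c| ^ (-ρ)), mul_assoc]
        exact lintegral_const_mul' _ _ ofReal_ne_top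

lemma lintegral_mul_lintegral_rpow_abs_sub_le {p : ℝ} (hp : 0 ≤ p) {G H : ℝ → ℝ≥0∞}
    (hG : Measurable G) (hH : Measurable H) :
    ∫⁻ y, H y * ∫⁻ z, ENNReal.ofReal (|z - y| ^ p) * G z ≤
      ENNReal.ofReal (2 ^ p) * ((∫⁻ y, H y * ENNReal.ofReal (|y| ^ p)) * (∫⁻ z, G z) +
        (∫⁻ z, G z * ENNReal.ofReal (|z| ^ p)) * ∫⁻ y, H y) := by
  have inner : ∀ y, ∫⁻ z, ENNReal.ofReal (|z - y| ^ p) * G z ≤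
      ENNReal.ofReal (2 ^ p) * (ENNReal.ofReal (|y| ^ p) * (∫⁻ z, G z) +
        ∫⁻ z, G z * ENNReal.ofReal (|z| ^ p)) := fun y => calc
    _ ≤ ∫⁻ z, ENNReal.ofReal (2 ^ p) *
          (ENNReal.ofReal (|y| ^ p) * G z + G z * ENNReal.ofReal (|z| ^ p)) := by
        refine lintegral_mono fun z => ?_
        calc ENNReal.ofReal (|z - y| ^ p) * G z
            ≤ ENNReal.ofReal (2 ^ p * (|y| ^ p + |z| ^ p)) * G z := by
              gcongr; exact rpow_abs_sub_le hp y z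
          _ = _ := by
              rw [ENNReal.ofReal_mul (by positivity), ENNReal.ofReal_add (by positivity)
                (by positivity)]
              ring
    _ = _ := by
        rw [lintegral_const_mul' _ _ ofReal_ne_top, lintegral_add_left (hG.const_mul _),
          lintegral_const_mul _ hG]
  calc _ ≤ ∫⁻ y, ENNReal.ofReal (2 ^ p) * ((H y * ENNReal.ofReal (|y| ^ p)) * (∫⁻ z, G z) +
          H y * ∫⁻ z, G z * ENNReal.ofReal (|z| ^ p)) :=
        lintegral_mono fun y => (mul_le_mul_right (inner y) _).trans_eq (by ring)
    _ = _ := by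
        rw [lintegral_const_mul' _ _ ofReal_ne_top,
          lintegral_add_left (by fun_prop), lintegral_mul_const _ (by fun_prop),
          lintegral_mul_const _ hH, mul_comm (∫⁻ y, H y)]

lemma memLp_and_memLp_mul_of_memLp_one_add_mul {α : Type*} [MeasurableSpace α] {μ : Measure α}
    {q : ℝ≥0∞} {f : α → ℂ} {w : α → ℝ} (hw : Measurable w) (hw₀ : ∀ x, 0 ≤ w x)
    (h : MemLp (fun x => ((1 + w x : ℝ) : ℂ) * f x) q μ) :
    MemLp f q μ ∧ MemLp (fun x => f x * (w x : ℂ)) q μ := by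
  have hf : AEStronglyMeasurable f μ := by
    have hinv : f = fun x => (((1 + w x)⁻¹ : ℝ) : ℂ) * (((1 + w x : ℝ) : ℂ) * f x) :=
      funext fun x => by
        have : 1 + w x ≠ 0 := by linarith [hw₀ x]
        rw [← mul_assoc, ← Complex.ofReal_mul, inv_mul_cancel₀ this, Complex.ofReal_one, one_mul]
    rw [hinv]
    exact (by fun_prop : Measurable fun x => (((1 + w x)⁻¹ : ℝ) : ℂ)).aestronglyMeasurable.mul h.1
  have hnorm : ∀ x, ‖((1 + w x : ℝ) : ℂ) * f x‖ = ‖f x‖ + ‖f x * (w x : ℂ)‖ := fun x => by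
    rw [norm_mul, norm_mul, Complex.norm_real, Complex.norm_real, Real.norm_of_nonneg (hw₀ x),
      Real.norm_of_nonneg (by linarith [hw₀ x])]
    ring
  refine ⟨h.of_le hf (ae_of_all _ fun x => ?_),
    h.of_le (hf.mul (by fun_prop : Measurable fun x => (w x : ℂ)).aestronglyMeasurable)
      (ae_of_all _ fun x => ?_)⟩ <;>
  simp only [hnorm, le_add_iff_nonneg_right, le_add_iff_nonneg_left, norm_nonneg]

lemma eLpNorm_one_mul_ofReal_eq_lintegral {α : Type*} [MeasurableSpace α] {μ : Measure α}
    {f : α → ℂ} {F : α → ℝ≥0∞} (hF : (fun x => ‖f x‖ₑ) =ᵐ[μ] F) {w : α → ℝ}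
    (hw₀ : ∀ x, 0 ≤ w x) :
    eLpNorm (fun x => f x * (w x : ℂ)) 1 μ = ∫⁻ x, F x * ENNReal.ofReal (w x) ∂μ := by
  rw [eLpNorm_one_eq_lintegral_enorm]
  refine lintegral_congr_ae (hF.mono fun x (hx : ‖f x‖ₑ = F x) => ?_)
  show ‖f x * (w x : ℂ)‖ₑ = F x * ENNReal.ofReal (w x)
  rw [enorm_mul, ← hx, ← ofReal_norm ((w x : ℝ) : ℂ), Complex.norm_real,
    Real.norm_of_nonneg (hw₀ x)]

/-- The `ℝ≥0∞`-valued majorant of `C_φ |D^α(u,v,w)|`, with `F`, `G`, `H` in the roles of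
`|ψ|`, `|χ|`, `|φ|`. -/
noncomputable def basicMajorant (ρ u v : ℝ) (F G H : ℝ → ℝ≥0∞) (w : ℝ) : ℝ≥0∞ :=
  ∫⁻ a in Ioi 0, ∫⁻ b,
    ENNReal.ofReal (a ^ (-ρ - 3)) * (F ((w - b) / a) * G ((v - b) / a) * H ((u - b) / a))

section Majorant

variable {ρ u v : ℝ} {F G H : ℝ → ℝ≥0∞}

lemma lintegral_lintegral_basicMajorant_integrand_eq (hF : Measurable F) (hG : Measurable G)
    (hH : Measurable H) {a : ℝ} (ha : 0 < a) :
    ∫⁻ w, ∫⁻ b,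
        ENNReal.ofReal (a ^ (-ρ - 3)) * (F ((w - b) / a) * G ((v - b) / a) * H ((u - b) / a)) =
      ENNReal.ofReal (a ^ (-ρ - 1)) * (∫⁻ y, H y * G (y + (v - u) / a)) * ∫⁻ x, F x := by
  have hpow : ENNReal.ofReal (a ^ (-ρ - 3)) * ENNReal.ofReal a * ENNReal.ofReal a =
      ENNReal.ofReal (a ^ (-ρ - 1)) := by
    rw [← ENNReal.ofReal_mul (by positivity), ← ENNReal.ofReal_mul (by positivity), mul_assoc,
      ← sq, ← Real.rpow_add_natCast ha.ne']
    norm_num [show -ρ - 3 + 2 = -ρ - 1 by ring]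
  have hw : ∀ b, ∫⁻ w, ENNReal.ofReal (a ^ (-ρ - 3)) *
      (F ((w - b) / a) * G ((v - b) / a) * H ((u - b) / a)) =
      ENNReal.ofReal (a ^ (-ρ - 3)) * (ENNReal.ofReal a * ∫⁻ x, F x) *
        (G ((v - b) / a) * H ((u - b) / a)) := fun b => by
    simp_rw [mul_assoc, mul_comm (F _), ← mul_assoc]
    rw [lintegral_const_mul _ (by fun_prop), lintegral_comp_sub_div F ha.ne', abs_of_pos ha]
    ring
  have hb : ∫⁻ b, G ((v - b) / a) * H ((u - b) / a) =
      ENNReal.ofReal a * ∫⁻ y, H y * G (y + (v - u) / a) := by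
    have := lintegral_comp_sub_left_div (fun y => H y * G (y + (v - u) / a)) ha.ne' u
    rw [abs_of_pos ha] at this
    rw [← this]
    congr 1 with b
    rw [mul_comm, ← add_div, sub_add_sub_cancel']
  rw [lintegral_lintegral_swap (by fun_prop), lintegral_congr hw,
    lintegral_const_mul _ (by fun_prop), hb, ← hpow]
  ring

lemma lintegral_basicMajorant_eq (hF : Measurable F) (hG : Measurable G) (hH : Measurable H) :
    ∫⁻ w, basicMajorant ρ u v F G H w =
      ∫⁻ a in Ioi 0,
        ENNReal.ofReal (a ^ (-ρ - 1)) * (∫⁻ y, H y * G (y + (v - u) / a)) * ∫⁻ x, F x := by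
  unfold basicMajorant
  rw [lintegral_lintegral_swap]
  · exact setLIntegral_congr_fun measurableSet_Ioi fun a ha =>
      lintegral_lintegral_basicMajorant_integrand_eq hF hG hH ha
  · refine (Measurable.lintegral_prod_right' (f := fun q : (ℝ × ℝ) × ℝ =>
      ENNReal.ofReal (q.1.2 ^ (-ρ - 3)) * (F ((q.1.1 - q.2) / q.1.2) * G ((v - q.2) / q.1.2) *
        H ((u - q.2) / q.1.2))) ?_).aemeasurable
    fun_prop

lemma lintegral_basicMajorant_le (hρ : 1 ≤ ρ) (hF : Measurable F) (hG : Measurable G)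
    (hH : Measurable H) (huv : u ≠ v) :
    ∫⁻ w, basicMajorant ρ u v F G H w ≤
      ENNReal.ofReal (2 ^ (ρ - 1) * |u - v| ^ (-ρ)) *
        ((∫⁻ y, H y * ENNReal.ofReal (|y| ^ (ρ - 1))) * (∫⁻ z, G z) +
          (∫⁻ z, G z * ENNReal.ofReal (|z| ^ (ρ - 1))) * ∫⁻ y, H y) * ∫⁻ x, F x := by
  have hc : v - u ≠ 0 := sub_ne_zero.mpr huv.symm
  rw [lintegral_basicMajorant_eq hF hG hH, lintegral_mul_const _ (by fun_prop)]
  gcongr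
  calc ∫⁻ a in Ioi 0, ENNReal.ofReal (a ^ (-ρ - 1)) * ∫⁻ y, H y * G (y + (v - u) / a)
      = ∫⁻ y, H y * ∫⁻ a in Ioi 0, ENNReal.ofReal (a ^ (-ρ - 1)) * G (y + (v - u) / a) := by
        simp_rw [← lintegral_const_mul' _ _ ofReal_ne_top]
        rw [lintegral_lintegral_swap (by fun_prop)]
        refine lintegral_congr fun y => ?_
        rw [← lintegral_const_mul _ (by fun_prop)]
        simp_rw [mul_left_comm]
    _ ≤ ∫⁻ y, H y * (ENNReal.ofReal (|v - u| ^ (-ρ)) *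
          ∫⁻ z, ENNReal.ofReal (|z - y| ^ (ρ - 1)) * G z) := by
        gcongr with y
        exact setLIntegral_Ioi_rpow_mul_comp_add_div_le ρ hc y G
    _ ≤ _ := by
        simp_rw [mul_left_comm (H _), lintegral_const_mul' _ _ ofReal_ne_top]
        rw [ENNReal.ofReal_mul (by positivity), abs_sub_comm, mul_comm (ENNReal.ofReal (2 ^ _)),
          mul_assoc]
        gcongr
        exact lintegral_mul_lintegral_rpow_abs_sub_le (by linarith) hG hH

lemma basicMajorant_congr_ae {F' G' H' : ℝ → ℝ≥0∞} (hF : F =ᵐ[volume] F')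
    (hG : G =ᵐ[volume] G') (hH : H =ᵐ[volume] H') :
    basicMajorant ρ u v F G H = basicMajorant ρ u v F' G' H' := by
  funext w
  refine setLIntegral_congr_fun measurableSet_Ioi fun a (ha : 0 < a) => lintegral_congr_ae ?_
  filter_upwards [ae_eq_comp_sub_left_div hF ha.ne' w, ae_eq_comp_sub_left_div hG ha.ne' v,
    ae_eq_comp_sub_left_div hH ha.ne' u] with b hFb hGb hHb
  rw [hFb, hGb, hHb]

end Majorant

lemma admConst_nonneg (φ : ℝ → ℂ) : 0 ≤ admConst φ :=
  integral_nonneg fun ω => by positivity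

lemma norm_fracWav (θ ρ : ℝ) (f : ℝ → ℂ) (a b t : ℝ) :
    ‖fracWav θ ρ f a b t‖ = |a| ^ (-ρ) * ‖f ((t - b) / a)‖ := by
  have hphase : -(Complex.I / 2) * ((t : ℂ) ^ 2 - (b : ℂ) ^ 2) *
      ((Real.cos θ / Real.sin θ : ℝ) : ℂ) =
      ((-(t ^ 2 - b ^ 2) * (Real.cos θ / Real.sin θ) / 2 : ℝ) : ℂ) * Complex.I := by
    push_cast; ring
  rw [fracWav, hphase, norm_mul, norm_mul, Complex.norm_exp_ofReal_mul_I, one_mul,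
    Complex.norm_real, Real.norm_of_nonneg (by positivity)]

lemma enorm_basicD_integrand (θ ρ : ℝ) (ψ χ φ : ℝ → ℂ) {a : ℝ} (ha : 0 < a) (b u v w : ℝ) :
    ‖(starRingEnd ℂ) (fracWav θ ρ ψ a b w) * (starRingEnd ℂ) (fracWav θ ρ χ a b v) *
        fracWav θ ρ φ a b u * ((|a| ^ (2 * ρ - 3) : ℝ) : ℂ)‖ₑ =
      ENNReal.ofReal (a ^ (-ρ - 3)) *
        (‖ψ ((w - b) / a)‖ₑ * ‖χ ((v - b) / a)‖ₑ * ‖φ ((u - b) / a)‖ₑ) := by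
  have hpow : a ^ (-ρ) * a ^ (-ρ) * a ^ (-ρ) * a ^ (2 * ρ - 3) = a ^ (-ρ - 3) := by
    rw [← Real.rpow_add ha, ← Real.rpow_add ha, ← Real.rpow_add ha]
    ring_nf
  simp_rw [← ofReal_norm, norm_mul, Complex.norm_conj, norm_fracWav, Complex.norm_real,
    Real.norm_of_nonneg (by positivity : 0 ≤ |a| ^ (2 * ρ - 3)), abs_of_pos ha, ← hpow]
  rw [← ENNReal.ofReal_mul (by positivity), ← ENNReal.ofReal_mul (by positivity),
    ← ENNReal.ofReal_mul (by positivity)]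
  congr 1
  ring

lemma enorm_basicD_le (θ ρ : ℝ) (ψ χ φ : ℝ → ℂ) (u v w : ℝ) :
    ‖basicD θ ρ ψ χ φ u v w‖ₑ ≤ ENNReal.ofReal (admConst φ)⁻¹ *
      basicMajorant ρ u v (fun x => ‖ψ x‖ₑ) (fun x => ‖χ x‖ₑ) (fun x => ‖φ x‖ₑ) w := by
  rw [basicD, enorm_mul, ← ofReal_norm, norm_inv, Complex.norm_real,
    Real.norm_of_nonneg (admConst_nonneg φ)]
  gcongr
  refine (enorm_integral_le_lintegral_enorm _).trans <|
    (lintegral_mono fun a => enorm_integral_le_lintegral_enorm _).trans_eq <|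
      setLIntegral_congr_fun measurableSet_Ioi fun a ha => ?_
  exact lintegral_congr fun b => enorm_basicD_integrand θ ρ ψ χ φ ha b u v w

lemma integral_norm_le_toReal_lintegral_enorm {α E : Type*} [MeasurableSpace α]
    {μ : Measure α} [NormedAddCommGroup E] (f : α → E) :
    ∫ x, ‖f x‖ ∂μ ≤ (∫⁻ x, ‖f x‖ₑ ∂μ).toReal :=
  (Real.le_norm_self _).trans <| (norm_integral_le_lintegral_norm _).trans_eq <| by
    simp only [norm_norm, ofReal_norm]

lemma lintegral_enorm_basicD_le (θ : ℝ) {ρ : ℝ} (hρ : 1 ≤ ρ) {ψ φ χ : ℝ → ℂ}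
    (hψ : AEStronglyMeasurable ψ volume) (hφ : AEStronglyMeasurable φ volume)
    (hχ : AEStronglyMeasurable χ volume) {u v : ℝ} (huv : u ≠ v) :
    ∫⁻ w, ‖basicD θ ρ ψ χ φ u v w‖ₑ ≤ ENNReal.ofReal (admConst φ)⁻¹ *
      (ENNReal.ofReal (2 ^ (ρ - 1) * |u - v| ^ (-ρ)) *
        (eLpNorm (fun x : ℝ => φ x * ((|x| ^ (ρ - 1) : ℝ) : ℂ)) 1 volume * eLpNorm χ 1 volume +
          eLpNorm (fun y : ℝ => χ y * ((|y| ^ (ρ - 1) : ℝ) : ℂ)) 1 volume * eLpNorm φ 1 volume) *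
        eLpNorm ψ 1 volume) := by
  -- Tonelli needs measurable integrands, so `‖ψ‖ₑ`, `‖χ‖ₑ`, `‖φ‖ₑ` are replaced by
  -- measurable versions, which leaves the majorant unchanged.
  obtain ⟨F, hF, hψF⟩ := hψ.enorm
  obtain ⟨G, hG, hχG⟩ := hχ.enorm
  obtain ⟨H, hH, hφH⟩ := hφ.enorm
  have hw₀ : ∀ y : ℝ, 0 ≤ |y| ^ (ρ - 1) := fun y => by positivity
  rw [eLpNorm_one_mul_ofReal_eq_lintegral hφH hw₀, eLpNorm_one_mul_ofReal_eq_lintegral hχG hw₀]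
  simp only [eLpNorm_one_eq_lintegral_enorm]
  rw [lintegral_congr_ae hψF, lintegral_congr_ae hχG, lintegral_congr_ae hφH]
  calc ∫⁻ w, ‖basicD θ ρ ψ χ φ u v w‖ₑ
      ≤ ∫⁻ w, ENNReal.ofReal (admConst φ)⁻¹ * basicMajorant ρ u v F G H w := by
        rw [← basicMajorant_congr_ae hψF hχG hφH]
        exact lintegral_mono fun w => enorm_basicD_le θ ρ ψ χ φ u v w
    _ ≤ _ := by
        rw [lintegral_const_mul' _ _ ofReal_ne_top]
        gcongr
        exact lintegral_basicMajorant_le hρ hF hG hH huv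

theorem basicD_L1_third'_general (θ ρ : ℝ) (hρ : 1 ≤ ρ)
    (ψ φ χ : ℝ → ℂ) (hψ : MemLp ψ 1 volume)
    (hφ : MemLp (fun y : ℝ => ((1 + |y| ^ (ρ - 1) : ℝ) : ℂ) * φ y) 1 volume)
    (hχ : MemLp (fun y : ℝ => ((1 + |y| ^ (ρ - 1) : ℝ) : ℂ) * χ y) 1 volume)
    (u v : ℝ) (huv : u ≠ v) :
    (∫ w : ℝ, ‖basicD θ ρ ψ χ φ u v w‖) ≤
      (admConst φ)⁻¹ * 2 ^ (ρ - 1) * |u - v| ^ (-ρ) *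
        ((eLpNorm (fun x : ℝ => φ x * ((|x| ^ (ρ - 1) : ℝ) : ℂ)) 1 volume).toReal *
            (eLpNorm χ 1 volume).toReal +
          (eLpNorm (fun y : ℝ => χ y * ((|y| ^ (ρ - 1) : ℝ) : ℂ)) 1 volume).toReal *
            (eLpNorm φ 1 volume).toReal) *
        (eLpNorm ψ 1 volume).toReal := by
  have hw : Measurable fun y : ℝ => |y| ^ (ρ - 1) := by fun_prop
  have hw₀ : ∀ y : ℝ, 0 ≤ |y| ^ (ρ - 1) := fun y => by positivity
  obtain ⟨hφ₁, hφw⟩ := memLp_and_memLp_mul_of_memLp_one_add_mul hw hw₀ hφ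
  obtain ⟨hχ₁, hχw⟩ := memLp_and_memLp_mul_of_memLp_one_add_mul hw hw₀ hχ
  have := hφw.eLpNorm_ne_top
  have := hχ₁.eLpNorm_ne_top
  have := hχw.eLpNorm_ne_top
  have := hφ₁.eLpNorm_ne_top
  have := hψ.eLpNorm_ne_top
  calc (∫ w, ‖basicD θ ρ ψ χ φ u v w‖) ≤ (∫⁻ w, ‖basicD θ ρ ψ χ φ u v w‖ₑ).toReal :=
        integral_norm_le_toReal_lintegral_enorm _
    _ ≤ _ := ENNReal.toReal_mono (by finiteness)
        (lintegral_enorm_basicD_le θ hρ hψ.1 hφ₁.1 hχ₁.1 huv)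
    _ = _ := by
        rw [ENNReal.toReal_mul, ENNReal.toReal_mul, ENNReal.toReal_mul,
          ENNReal.toReal_add (by finiteness) (by finiteness), ENNReal.toReal_mul,
          ENNReal.toReal_mul, ENNReal.toReal_ofReal (inv_nonneg.mpr (admConst_nonneg φ)),
          ENNReal.toReal_ofReal (by positivity)]
        ring

/-- Theorem 3.2(ii): L¹ bound of the basic function in the third variable, case `ρ ≥ 1`. -/
theorem basicD_L1_third' (θ ρ : ℝ) (hθ : Real.sin θ ≠ 0) (hρ : 1 ≤ ρ)
    (ψ φ χ : ℝ → ℂ) (hψ : MemLp ψ 1 volume)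
    (hφ : MemLp (fun y : ℝ => ((1 + |y| ^ (ρ - 1) : ℝ) : ℂ) * φ y) 1 volume)
    (hχ : MemLp (fun y : ℝ => ((1 + |y| ^ (ρ - 1) : ℝ) : ℂ) * χ y) 1 volume)
    (hCpos : 0 < admConst φ)
    (hCfin : Integrable (fun ω : ℝ => ‖FourierTransform.fourier φ ω‖ ^ 2 / |ω|))
    (u v : ℝ) (huv : u ≠ v) :
    (∫ w : ℝ, ‖basicD θ ρ ψ χ φ u v w‖) ≤
      (admConst φ)⁻¹ * 2 ^ (ρ - 1) * |u - v| ^ (-ρ) *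
        ((eLpNorm (fun x : ℝ => φ x * ((|x| ^ (ρ - 1) : ℝ) : ℂ)) 1 volume).toReal *
            (eLpNorm χ 1 volume).toReal +
          (eLpNorm (fun y : ℝ => χ y * ((|y| ^ (ρ - 1) : ℝ) : ℂ)) 1 volume).toReal *
            (eLpNorm φ 1 volume).toReal) *
        (eLpNorm ψ 1 volume).toReal :=
  basicD_L1_third'_general θ ρ hρ ψ φ χ hψ hφ hχ u v huv
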